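/- Let 3 ≤ k < 2i+1 with k odd. If y·P_{2i+3}(u) ≡ z·P_{2i+k+1}(u) (mod P_{2i+1}(u)) with 0 < z ≤ u and y·P_{2i+3}(u) > z·P_{2i+k+1}(u) > 0, y minimal positive, then z = u and y = P_k(u); moreover P_k(u)·P_{2i+3}(u) = P_{k-2}(u)·P_{2i+1}(u) + u·P_{2i+k+1}(u). -/

import Mathlib

/-!
Modulo `N = P_{2i+1}` the addition formula gives `P_{2i+3} ≡ u P_{2i}` and
`P_{2i+k+1} ≡ P_k P_{2i}`; since `P_{2i}` is invertible mod `N` the hypothesis becomes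
`y u ≡ z P_k (mod N)`. The identity `P_k P_{2i+3} = P_{k-2} P_{2i+1} + u P_{2i+k+1}` shows that
`(y, z) = (P_k, u)` is admissible, so minimality gives `y ≤ P_k`. Both sides of the congruence
are then below `u P_k < P_{k+2} ≤ N`, hence `y u = z P_k`, and as `P_k ≡ 1 (mod u)` for odd `k`,
`u ∣ z`, which forces `z = u` and `y = P_k`.
-/

def pell (u : ℕ) : ℕ → ℕ
  | 0 => 0
  | 1 => 1
  | n + 2 => u * pell u (n + 1) + pell u n

section PellFacts

variable {u : ℕ}

lemma pell_add_two (u n : ℕ) : pell u (n + 2) = u * pell u (n + 1) + pell u n := rfl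

lemma pell_two (u : ℕ) : pell u 2 = u := by simp [pell]

lemma pell_pos (hu : 0 < u) : ∀ {n : ℕ}, 0 < n → 0 < pell u n
  | 1, _ => by simp [pell]
  | n + 2, _ => by
    rw [pell_add_two]
    exact Nat.add_pos_left (Nat.mul_pos hu (pell_pos hu n.succ_pos)) _

lemma pell_monotone (hu : 0 < u) : Monotone (pell u) := by
  refine monotone_nat_of_le_succ fun n => ?_
  cases n with
  | zero => simp [pell]
  | succ n =>
    rw [pell_add_two]
    have := Nat.le_mul_of_pos_left (pell u (n + 1)) hu
    omega

lemma mul_pell_lt_pell_add_two (hu : 0 < u) {n : ℕ} (hn : 0 < n) :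
    u * pell u n < pell u (n + 2) :=
  calc u * pell u n ≤ u * pell u (n + 1) := Nat.mul_le_mul_left u (pell_monotone hu n.le_succ)
    _ < u * pell u (n + 1) + pell u n := Nat.lt_add_of_pos_right (pell_pos hu hn)
    _ = pell u (n + 2) := (pell_add_two u n).symm

lemma pell_add_add_one (u : ℕ) : ∀ m n : ℕ,
    pell u (m + n + 1) = pell u (m + 1) * pell u (n + 1) + pell u m * pell u n
  | m, 0 => by simp [pell]
  | m, 1 => by simp only [pell]; ring
  | m, n + 2 => by
    rw [show m + (n + 2) + 1 = m + n + 1 + 2 by ring, pell_add_two,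
      show m + n + 1 + 1 = m + (n + 1) + 1 by ring, pell_add_add_one u m (n + 1),
      pell_add_add_one u m n, pell_add_two u (n + 1), pell_add_two u n]
    ring

lemma pell_mul_pell_add_two (u m j : ℕ) :
    pell u (j + 2) * pell u (m + 2) = pell u j * pell u m + u * pell u (m + j + 2) := by
  rw [show m + j + 2 = (m + 1) + j + 1 by ring, pell_add_add_one u (m + 1) j, pell_add_two u j,
    pell_add_two u m]
  ring

lemma pell_add_modEq (u n k : ℕ) :
    pell u (n + k + 1) ≡ pell u n * pell u k [MOD pell u (n + 1)] := by
  rw [pell_add_add_one, Nat.ModEq, Nat.mul_add_mod_self_left]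

lemma coprime_pell_succ (u : ℕ) : ∀ n : ℕ, Nat.Coprime (pell u n) (pell u (n + 1))
  | 0 => by simp [pell]
  | n + 1 => by
    rw [pell_add_two, Nat.coprime_mul_right_add_right]
    exact (coprime_pell_succ u n).symm

lemma coprime_pell_of_odd (u : ℕ) {k : ℕ} (hk : Odd k) : Nat.Coprime u (pell u k) := by
  obtain ⟨t, rfl⟩ := hk
  induction t with
  | zero => simp [pell]
  | succ t ih =>
    rw [show 2 * (t + 1) + 1 = 2 * t + 1 + 2 by ring, pell_add_two,
      Nat.coprime_mul_left_add_right]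
    exact ih

lemma mul_modEq_mul_pell_of_modEq {n k y z : ℕ}
    (h : y * pell u (n + 3) ≡ z * pell u (n + k + 1) [MOD pell u (n + 1)]) :
    y * u ≡ z * pell u k [MOD pell u (n + 1)] := by
  have h3 : pell u (n + 3) ≡ u * pell u n [MOD pell u (n + 1)] := by
    simpa [pell_two, Nat.mul_comm] using pell_add_modEq u n 2
  have hk : pell u (n + k + 1) ≡ pell u k * pell u n [MOD pell u (n + 1)] := by
    simpa [Nat.mul_comm] using pell_add_modEq u n k
  refine Nat.ModEq.cancel_right_of_coprime (c := pell u n) (coprime_pell_succ u n).symm ?_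
  simpa only [Nat.mul_assoc] using (h3.mul_left y).symm.trans (h.trans (hk.mul_left z))

end PellFacts

theorem stmt_16_general (u : ℕ) (hu : 1 ≤ u) (i k : ℕ) (hk3 : 3 ≤ k) (hk : k < 2 * i + 1)
    (hodd : Odd k) (y z : ℕ) (hz : 0 < z) (hzu : z ≤ u)
    (hcong : y * pell u (2 * i + 3) ≡ z * pell u (2 * i + k + 1) [MOD pell u (2 * i + 1)])
    (hmin : ∀ y' z' : ℕ, 0 < y' → 0 < z' → z' ≤ u →
      y' * pell u (2 * i + 3) ≡ z' * pell u (2 * i + k + 1) [MOD pell u (2 * i + 1)] →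
      y' * pell u (2 * i + 3) > z' * pell u (2 * i + k + 1) → y ≤ y') :
    z = u ∧ y = pell u k ∧
      pell u k * pell u (2 * i + 3) =
        pell u (k - 2) * pell u (2 * i + 1) + u * pell u (2 * i + k + 1) := by
  obtain ⟨j, rfl⟩ : ∃ j, k = j + 2 := ⟨k - 2, by omega⟩
  have hid : pell u (j + 2) * pell u (2 * i + 3) =
      pell u (j + 2 - 2) * pell u (2 * i + 1) + u * pell u (2 * i + (j + 2) + 1) := by
    simpa [show 2 * i + 1 + j + 2 = 2 * i + (j + 2) + 1 by ring] using
      pell_mul_pell_add_two u (2 * i + 1) j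
  have hy_le : y ≤ pell u (j + 2) := by
    refine hmin _ u (pell_pos hu (by omega)) hu le_rfl ?_ ?_ <;> rw [hid]
    · simp [Nat.ModEq]
    · have := Nat.mul_pos (pell_pos (u := u) hu (show 0 < j + 2 - 2 by omega))
        (pell_pos hu (show 0 < 2 * i + 1 by omega))
      omega
  have hbound : u * pell u (j + 2) < pell u (2 * i + 1) :=
    (mul_pell_lt_pell_add_two hu (by omega)).trans_le
      (pell_monotone hu (by obtain ⟨t, ht⟩ := hodd; omega))
  have heq : y * u = z * pell u (j + 2) :=
    (mul_modEq_mul_pell_of_modEq hcong).eq_of_lt_of_lt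
      (lt_of_le_of_lt (by rw [Nat.mul_comm]; gcongr) hbound)
      (lt_of_le_of_lt (by gcongr) hbound)
  have hz_eq : z = u := by
    refine le_antisymm hzu (Nat.le_of_dvd hz ?_)
    exact (coprime_pell_of_odd u hodd).dvd_of_dvd_mul_right ⟨y, by rw [← heq, Nat.mul_comm]⟩
  rw [hz_eq, Nat.mul_comm u] at heq
  exact ⟨hz_eq, Nat.eq_of_mul_eq_mul_right hu heq, hid⟩

theorem stmt_16 (u : ℕ) (hu : 1 ≤ u) (i k : ℕ) (hk3 : 3 ≤ k) (hk : k < 2 * i + 1)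
    (hodd : Odd k) (y z : ℕ) (hy : 0 < y) (hz : 0 < z) (hzu : z ≤ u)
    (hcong : y * pell u (2 * i + 3) ≡ z * pell u (2 * i + k + 1) [MOD pell u (2 * i + 1)])
    (hgt : y * pell u (2 * i + 3) > z * pell u (2 * i + k + 1))
    (hpos : 0 < z * pell u (2 * i + k + 1))
    (hmin : ∀ y' z' : ℕ, 0 < y' → 0 < z' → z' ≤ u →
      y' * pell u (2 * i + 3) ≡ z' * pell u (2 * i + k + 1) [MOD pell u (2 * i + 1)] →
      y' * pell u (2 * i + 3) > z' * pell u (2 * i + k + 1) → y ≤ y') :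
    z = u ∧ y = pell u k ∧
      pell u k * pell u (2 * i + 3) =
        pell u (k - 2) * pell u (2 * i + 1) + u * pell u (2 * i + k + 1) :=
  stmt_16_general u hu i k hk3 hk hodd y z hz hzu hcong hmin
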